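/- arXiv:2511.11974 — 4 statements merged into one kernel-verified Lean document; each statement's English description precedes it below -/
import Mathlib

section
/- Let l be a filter on an index set ι and let a, b, c, r, λ : ι → ℝ be functions such that, eventually along l: a > 0, b ≥ 0, c ≥ 0, λ ≥ 0, and λ·a = 1 + λ²·b + λ³·c − r. Assume moreover that λ·a is bounded along l (λ·a = O(1)), that b/a² → 0, c/a³ → 0, and r → 0 along l. Then, along l, λ·a − 1 − b/a² − c/a³ = O(|r| + (b/a²)² + (c/a³)²). -/
open Filter Asymptotics

set_option maxHeartbeats 1000000 in

private lemma key (x β γ r M : ℝ) (hM : 1 ≤ M) (hx : |x| ≤ M) (hβ0 : 0 ≤ β) (hβ1 : β ≤ 1)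
    (hγ0 : 0 ≤ γ) (hγ1 : γ ≤ 1) (heq : x = 1 + x ^ 2 * β + x ^ 3 * γ - r) :
    |x - 1 - β - γ| ≤ 13 * M ^ 5 * (|r| + β ^ 2 + γ ^ 2) := by
  set s := |r| with hs
  have hr1 : r ≤ s := le_abs_self r
  have hr2 : -s ≤ r := neg_abs_le r
  have hs0 : 0 ≤ s := abs_nonneg r
  obtain ⟨hxl, hxu⟩ := abs_le.1 hx
  have hM0 : (0:ℝ) < M := lt_of_lt_of_le one_pos hM
  have hx2 : x ^ 2 ≤ M ^ 2 := by nlinarith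
  have hx3u : x ^ 3 ≤ M ^ 3 := by nlinarith
  have hx3l : -M ^ 3 ≤ x ^ 3 := by nlinarith
  -- bound on d = x - 1
  have hd : |x - 1| ≤ M ^ 2 * β + M ^ 3 * γ + s := by
    rw [abs_le]
    constructor
    · nlinarith [mul_le_mul_of_nonneg_right hx3l hγ0, sq_nonneg x,
        mul_nonneg (sq_nonneg x) hβ0]
    · nlinarith [mul_le_mul_of_nonneg_right hx2 hβ0,
        mul_le_mul_of_nonneg_right hx3u hγ0]
  set D := M ^ 2 * β + M ^ 3 * γ + s with hD
  have hD0 : 0 ≤ D := by positivity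
  have h1 : |(x + 1) * (x - 1) * β| ≤ (M + 1) * D * β := by
    rw [abs_mul, abs_mul, abs_of_nonneg hβ0]
    have : |x + 1| ≤ M + 1 := by rw [abs_le]; constructor <;> linarith
    gcongr
  have h2 : |(x ^ 2 + x + 1) * (x - 1) * γ| ≤ (M ^ 2 + M + 1) * D * γ := by
    rw [abs_mul, abs_mul, abs_of_nonneg hγ0]
    have : |x ^ 2 + x + 1| ≤ M ^ 2 + M + 1 := by rw [abs_le]; constructor <;> nlinarith
    gcongr
  have he : x - 1 - β - γ = (x + 1) * (x - 1) * β + (x ^ 2 + x + 1) * (x - 1) * γ - r := by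
    linear_combination heq
  have htri : |x - 1 - β - γ| ≤ (M + 1) * D * β + (M ^ 2 + M + 1) * D * γ + s := by
    rw [he]
    have t1 := abs_sub ((x + 1) * (x - 1) * β + (x ^ 2 + x + 1) * (x - 1) * γ) r
    have t2 := abs_add_le ((x + 1) * (x - 1) * β) ((x ^ 2 + x + 1) * (x - 1) * γ)
    rw [← hs] at t1
    linarith [h1, h2, t1, t2]
  refine htri.trans ?_
  have hM2 : M ≤ M ^ 2 := by nlinarith [sq_nonneg (M - 1)]
  have hM5 : M ^ 2 ≤ M ^ 5 := pow_le_pow_right₀ hM (by norm_num)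
  have hM15 : (1:ℝ) ≤ M ^ 5 := by nlinarith
  have hM45 : M ^ 4 ≤ M ^ 5 := pow_le_pow_right₀ hM (by norm_num)
  have hM35 : M ^ 3 ≤ M ^ 5 := pow_le_pow_right₀ hM (by norm_num)
  have hM34 : M ^ 2 ≤ M ^ 4 := pow_le_pow_right₀ hM (by norm_num)
  have hM24 : M ^ 3 ≤ M ^ 4 := pow_le_pow_right₀ hM (by norm_num)
  rw [hD]
  have C1 : 0 ≤ s * (1 - β) * (M + 1) :=
    mul_nonneg (mul_nonneg hs0 (by linarith)) (by linarith)
  have C2 : 0 ≤ s * (1 - γ) * (M ^ 2 + M + 1) :=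
    mul_nonneg (mul_nonneg hs0 (by linarith)) (by positivity)
  have C3 : 0 ≤ s * (13 * M ^ 5 - M ^ 2 - 2 * M - 3) :=
    mul_nonneg hs0 (by linarith [hM2.trans hM5])
  have A : 0 ≤ M ^ 4 * (β - γ) ^ 2 := by positivity
  have Dd : 0 ≤ β * γ * (3 * M ^ 4 - 2 * M ^ 3 - M ^ 2) :=
    mul_nonneg (mul_nonneg hβ0 hγ0) (by linarith)
  have B1 : 0 ≤ β ^ 2 * (M ^ 5 - M ^ 4) := mul_nonneg (sq_nonneg β) (by linarith)
  have B2 : 0 ≤ β ^ 2 * (M ^ 5 - M ^ 3) := mul_nonneg (sq_nonneg β) (by linarith)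
  have B5 : 0 ≤ β ^ 2 * (M ^ 5 - M ^ 2) := mul_nonneg (sq_nonneg β) (by linarith)
  have B3 : 0 ≤ γ ^ 2 * (M ^ 5 - M ^ 4) := mul_nonneg (sq_nonneg γ) (by linarith)
  have B4 : 0 ≤ γ ^ 2 * (M ^ 5 - M ^ 3) := mul_nonneg (sq_nonneg γ) (by linarith)
  have B6 : 0 ≤ M ^ 5 * β ^ 2 := by positivity
  have B7 : 0 ≤ M ^ 5 * γ ^ 2 := by positivity
  linarith [C1, C2, C3, A, Dd, B1, B2, B3, B4, B5, B6, B7]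

/-- If eventually along a filter `l` we have `a > 0`, `b, c, λ ≥ 0` and
`λa = 1 + λ²b + λ³c − r`, with `λa = O(1)`, `b/a² → 0`, `c/a³ → 0` and `r → 0`, then
`λa − 1 − b/a² − c/a³ = O(|r| + (b/a²)² + (c/a³)²)` along `l`. -/
theorem stmt6 {ι : Type*} (l : Filter ι) (a b c r lam : ι → ℝ)
    (ha : ∀ᶠ i in l, 0 < a i) (hb : ∀ᶠ i in l, 0 ≤ b i) (hc : ∀ᶠ i in l, 0 ≤ c i)
    (hlam : ∀ᶠ i in l, 0 ≤ lam i)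
    (heq : ∀ᶠ i in l,
      lam i * a i = 1 + (lam i) ^ 2 * b i + (lam i) ^ 3 * c i - r i)
    (hbound : (fun i => lam i * a i) =O[l] (fun _ => (1 : ℝ)))
    (hba : Tendsto (fun i => b i / (a i) ^ 2) l (nhds 0))
    (hca : Tendsto (fun i => c i / (a i) ^ 3) l (nhds 0))
    (hr : Tendsto r l (nhds 0)) :
    (fun i => lam i * a i - 1 - b i / (a i) ^ 2 - c i / (a i) ^ 3) =O[l]
      (fun i => |r i| + (b i / (a i) ^ 2) ^ 2 + (c i / (a i) ^ 3) ^ 2) := by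
  obtain ⟨C0, hC0⟩ := hbound.bound
  set M : ℝ := max C0 1 with hMdef
  have hM1 : (1:ℝ) ≤ M := le_max_right _ _
  have hβ1 : ∀ᶠ i in l, b i / (a i) ^ 2 ≤ 1 := hba.eventually (eventually_le_nhds one_pos)
  have hγ1 : ∀ᶠ i in l, c i / (a i) ^ 3 ≤ 1 := hca.eventually (eventually_le_nhds one_pos)
  rw [isBigO_iff]
  refine ⟨13 * M ^ 5, ?_⟩
  filter_upwards [ha, hb, hc, heq, hC0, hβ1, hγ1] with i ha' hb' hc' heq' hC' hβ1' hγ1'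
  have haz : a i ≠ 0 := ne_of_gt ha'
  have e2 : (lam i) ^ 2 * b i = (lam i * a i) ^ 2 * (b i / (a i) ^ 2) := by
    field_simp
  have e3 : (lam i) ^ 3 * c i = (lam i * a i) ^ 3 * (c i / (a i) ^ 3) := by
    field_simp
  have heq'' : lam i * a i = 1 + (lam i * a i) ^ 2 * (b i / (a i) ^ 2)
      + (lam i * a i) ^ 3 * (c i / (a i) ^ 3) - r i := by
    rw [← e2, ← e3]; exact heq'
  have hβ0 : 0 ≤ b i / (a i) ^ 2 := div_nonneg hb' (by positivity)
  have hγ0 : 0 ≤ c i / (a i) ^ 3 := div_nonneg hc' (by positivity)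
  have hxM : |lam i * a i| ≤ M := by
    have : ‖lam i * a i‖ ≤ C0 * ‖(1:ℝ)‖ := hC'
    rw [Real.norm_eq_abs, norm_one, mul_one] at this
    exact this.trans (le_max_left _ _)
  have hkey := key (lam i * a i) (b i / (a i) ^ 2) (c i / (a i) ^ 3) (r i) M
    hM1 hxM hβ0 hβ1' hγ0 hγ1' heq''
  have hg : 0 ≤ |r i| + (b i / (a i) ^ 2) ^ 2 + (c i / (a i) ^ 3) ^ 2 := by positivity
  rw [Real.norm_eq_abs, Real.norm_eq_abs, abs_of_nonneg hg]
  exact hkey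
end

section
/- For every fixed R > 0, as L → ∞ one has (∫₀^R r·sinh(r)·e^{−r²/(2L)} dr) / (∫₀^∞ r·sinh(r)·e^{−r²/(2L)} dr) = O(L^{−3/2} e^{−L/2}); in particular this ratio tends to 0 as L → ∞. -/
open Filter Asymptotics MeasureTheory

private lemma stmt9_aux (R : ℝ) (hR : 0 < R) :
    (fun L : ℝ =>
        (∫ r in (0 : ℝ)..R, r * Real.sinh r * Real.exp (-r ^ 2 / (2 * L))) /
          ∫ r in Set.Ioi (0 : ℝ), r * Real.sinh r * Real.exp (-r ^ 2 / (2 * L))) =O[atTop]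
      fun L : ℝ => L ^ (-(3 : ℝ) / 2) * Real.exp (-L / 2) := by
  rw [isBigO_iff]
  refine ⟨4 * Real.exp (1/2) * (R * Real.sinh R * R), ?_⟩
  filter_upwards [eventually_ge_atTop (1:ℝ)] with L hL1
  have hL0 : (0:ℝ) < L := lt_of_lt_of_le one_pos hL1
  set f : ℝ → ℝ := fun r => r * Real.sinh r * Real.exp (-r ^ 2 / (2 * L)) with hf
  -- integrability of f on Ioi 0
  have hcont : Continuous f := by fun_prop
  have hgint : Integrable (fun r : ℝ =>
      Real.exp (2*L) * Real.exp (-(1/(2*L)) * (r - 2*L)^2)) := by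
    have h1 : Integrable (fun r : ℝ => Real.exp (-(1/(2*L)) * r^2)) :=
      integrable_exp_neg_mul_sq (by positivity)
    exact (h1.comp_sub_right (2*L)).const_mul _
  have hf_int : IntegrableOn f (Set.Ioi 0) := by
    refine (hgint.restrict (s := Set.Ioi 0)).mono'
      hcont.aestronglyMeasurable.restrict ?_
    refine (ae_restrict_iff' measurableSet_Ioi).2 (ae_of_all _ fun r hr => ?_)
    have hr0 : (0:ℝ) < r := hr
    have hsr : 0 ≤ Real.sinh r := Real.sinh_nonneg_iff.2 hr0.le
    have hEpos := Real.exp_pos (-r ^ 2 / (2 * L))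
    have h1 : ‖f r‖ = f r := by
      rw [Real.norm_eq_abs, abs_of_nonneg]
      exact mul_nonneg (mul_nonneg hr0.le hsr) hEpos.le
    rw [h1]
    have h2 : r ≤ Real.exp r := le_trans (by linarith) (Real.add_one_le_exp r)
    have h3 : Real.sinh r ≤ Real.exp r := by
      rw [Real.sinh_eq]
      nlinarith [Real.exp_pos (-r)]
    have h4 : r * Real.sinh r ≤ Real.exp r * Real.exp r :=
      mul_le_mul h2 h3 hsr (Real.exp_pos r).le
    calc f r = (r * Real.sinh r) * Real.exp (-r ^ 2 / (2 * L)) := rfl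
      _ ≤ (Real.exp r * Real.exp r) * Real.exp (-r ^ 2 / (2 * L)) :=
          mul_le_mul_of_nonneg_right h4 hEpos.le
      _ = Real.exp (2*L) * Real.exp (-(1/(2*L)) * (r - 2*L)^2) := by
          rw [← Real.exp_add, ← Real.exp_add, ← Real.exp_add]
          congr 1
          field_simp
          ring
  set den := ∫ r in Set.Ioi (0:ℝ), f r with hden
  -- denominator lower bound
  have hsub : Set.Ioc L (L + Real.sqrt L) ⊆ Set.Ioi (0:ℝ) :=
    fun r hr => lt_trans hL0 hr.1
  have hfnonneg : 0 ≤ᵐ[volume.restrict (Set.Ioi (0:ℝ))] f :=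
    (ae_restrict_iff' measurableSet_Ioi).2 (ae_of_all _ fun r hr => by
      have hr0 : (0:ℝ) < r := hr
      exact mul_nonneg (mul_nonneg hr0.le (Real.sinh_nonneg_iff.2 hr0.le))
        (Real.exp_pos _).le)
  have hDle : Real.sqrt L * (L/4 * Real.exp (L/2 - 1/2)) ≤ den := by
    have h1 : ∫ r in Set.Ioc L (L + Real.sqrt L), f r ≤ den :=
      setIntegral_mono_set hf_int hfnonneg (HasSubset.Subset.eventuallyLE hsub)
    have h2 : ∫ r in Set.Ioc L (L + Real.sqrt L), (L/4 * Real.exp (L/2 - 1/2))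
        ≤ ∫ r in Set.Ioc L (L + Real.sqrt L), f r := by
      refine setIntegral_mono_on
        (integrableOn_const ?_) (hf_int.mono_set hsub)
        measurableSet_Ioc ?_
      · rw [Real.volume_Ioc]; exact ENNReal.ofReal_ne_top
      · intro r hr
        obtain ⟨hrL, hrU⟩ := hr
        have hr1 : (1:ℝ) ≤ r := le_trans hL1 hrL.le
        have hr0 : (0:ℝ) < r := lt_of_lt_of_le one_pos hr1
        have h2e : (2:ℝ) ≤ Real.exp 1 := by nlinarith [Real.add_one_le_exp 1]
        have hexpr : Real.exp 1 ≤ Real.exp r := Real.exp_le_exp.2 hr1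
        have hexpneg : Real.exp (-r) ≤ 1 := Real.exp_le_one_iff.2 (by linarith)
        have hsinh : Real.exp r / 4 ≤ Real.sinh r := by
          rw [Real.sinh_eq]; linarith
        have hexp3 : Real.exp (L/2 - 1/2) ≤ Real.exp (r - r^2/(2*L)) := by
          apply Real.exp_le_exp.2
          have h0 : 0 ≤ r - L := le_of_lt (by linarith)
          have h1' : r - L ≤ Real.sqrt L := by linarith
          have hsq : (r - L)^2 ≤ L := by
            nlinarith [Real.sq_sqrt hL0.le, Real.sqrt_nonneg L]
          have heq : r - r^2/(2*L) = L/2 - (r - L)^2/(2*L) := by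
            field_simp
            ring
          rw [heq]
          have : (r-L)^2/(2*L) ≤ 1/2 := by
            rw [div_le_iff₀ (by positivity)]; linarith
          linarith
        calc L/4 * Real.exp (L/2 - 1/2)
            ≤ L/4 * Real.exp (r - r^2/(2*L)) :=
              mul_le_mul_of_nonneg_left hexp3 (by positivity)
          _ = L * (Real.exp r / 4) * Real.exp (-r^2/(2*L)) := by
              rw [show r - r^2/(2*L) = r + -r^2/(2*L) by ring, Real.exp_add]
              ring
          _ ≤ r * Real.sinh r * Real.exp (-r^2/(2*L)) := by
              refine mul_le_mul_of_nonneg_right ?_ (Real.exp_pos _).le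
              exact mul_le_mul hrL.le hsinh (by positivity) hr0.le
          _ = f r := rfl
    have h3 : ∫ r in Set.Ioc L (L + Real.sqrt L), (L/4 * Real.exp (L/2 - 1/2) : ℝ)
        = Real.sqrt L * (L/4 * Real.exp (L/2 - 1/2)) := by
      rw [setIntegral_const, measureReal_def, Real.volume_Ioc, smul_eq_mul]
      congr 1
      rw [show L + Real.sqrt L - L = Real.sqrt L by ring]
      exact ENNReal.toReal_ofReal (Real.sqrt_nonneg L)
    linarith
  have hD0 : 0 < Real.sqrt L * (L/4 * Real.exp (L/2 - 1/2)) := by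
    have := Real.sqrt_pos.2 hL0
    positivity
  have hden0 : 0 < den := lt_of_lt_of_le hD0 hDle
  -- numerator bound
  have hnum : ‖∫ r in (0:ℝ)..R, f r‖ ≤ R * Real.sinh R * R := by
    have hb : ∀ x ∈ Set.uIoc (0:ℝ) R, ‖f x‖ ≤ R * Real.sinh R := by
      intro x hx
      rw [Set.uIoc_of_le hR.le] at hx
      obtain ⟨hx0, hxR⟩ := hx
      have hsx : 0 ≤ Real.sinh x := Real.sinh_nonneg_iff.2 hx0.le
      have h1 : ‖f x‖ = f x := by
        rw [Real.norm_eq_abs, abs_of_nonneg]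
        exact mul_nonneg (mul_nonneg hx0.le hsx) (Real.exp_pos _).le
      rw [h1]
      have hE1 : Real.exp (-x ^ 2 / (2 * L)) ≤ 1 :=
        Real.exp_le_one_iff.2 (by rw [neg_div]; exact neg_nonpos.2 (by positivity))
      calc f x ≤ (x * Real.sinh x) * 1 :=
            mul_le_mul_of_nonneg_left hE1 (mul_nonneg hx0.le hsx)
        _ = x * Real.sinh x := by ring
        _ ≤ R * Real.sinh R :=
            mul_le_mul hxR (Real.sinh_le_sinh.2 hxR) hsx hR.le
    have := intervalIntegral.norm_integral_le_of_norm_le_const hb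
    simpa [abs_of_pos hR] using this
  -- assemble
  simp only [Real.norm_eq_abs]
  rw [abs_div, abs_of_pos hden0]
  have step : |∫ r in (0:ℝ)..R, f r| / den
      ≤ (R * Real.sinh R * R) / (Real.sqrt L * (L/4 * Real.exp (L/2 - 1/2))) := by
    refine div_le_div₀ ?_ ?_ hD0 hDle
    · have := Real.sinh_nonneg_iff.2 hR.le; positivity
    · simpa [Real.norm_eq_abs] using hnum
  refine step.trans (le_of_eq ?_)
  have habs : |L ^ (-(3:ℝ)/2) * Real.exp (-L/2)| = L ^ (-(3:ℝ)/2) * Real.exp (-L/2) :=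
    abs_of_nonneg (mul_nonneg (Real.rpow_nonneg hL0.le _) (Real.exp_pos _).le)
  rw [habs]
  have hrpow : L ^ (-(3:ℝ)/2) = (Real.sqrt L * L)⁻¹ := by
    rw [show (-(3:ℝ)/2) = -(3/2) by norm_num, Real.rpow_neg hL0.le]
    congr 1
    rw [show (3:ℝ)/2 = 1/2 + 1 by norm_num, Real.rpow_add hL0, Real.rpow_one,
      Real.sqrt_eq_rpow]
  rw [hrpow]
  have hsL : Real.sqrt L ≠ 0 := (Real.sqrt_pos.2 hL0).ne'
  have he1 : Real.exp (L/2 - 1/2) = Real.exp (L/2) * (Real.exp (1/2))⁻¹ := by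
    rw [← Real.exp_neg, ← Real.exp_add]; ring_nf
  have he2 : Real.exp (-L/2) = (Real.exp (L/2))⁻¹ := by
    rw [← Real.exp_neg]; ring_nf
  rw [he1, he2]
  field_simp

/-- For every fixed `R > 0`, as `L → ∞` the ratio
`(∫₀^R r sinh r e^{−r²/(2L)} dr) / (∫₀^∞ r sinh r e^{−r²/(2L)} dr)` is
`O(L^{−3/2} e^{−L/2})`; in particular it tends to `0`. -/
theorem stmt9 (R : ℝ) (hR : 0 < R) :
    ((fun L : ℝ =>
        (∫ r in (0 : ℝ)..R, r * Real.sinh r * Real.exp (-r ^ 2 / (2 * L))) /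
          ∫ r in Set.Ioi (0 : ℝ), r * Real.sinh r * Real.exp (-r ^ 2 / (2 * L))) =O[atTop]
      fun L : ℝ => L ^ (-(3 : ℝ) / 2) * Real.exp (-L / 2)) ∧
    Tendsto (fun L : ℝ =>
        (∫ r in (0 : ℝ)..R, r * Real.sinh r * Real.exp (-r ^ 2 / (2 * L))) /
          ∫ r in Set.Ioi (0 : ℝ), r * Real.sinh r * Real.exp (-r ^ 2 / (2 * L)))
      atTop (nhds 0) := by
  have hbig := stmt9_aux R hR
  refine ⟨hbig, hbig.trans_tendsto ?_⟩
  have h1 : Tendsto (fun L:ℝ => L ^ (-(3:ℝ)/2)) atTop (nhds 0) := by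
    rw [show (-(3:ℝ)/2) = -(3/2) by norm_num]
    exact tendsto_rpow_neg_atTop (by norm_num)
  have h2 : Tendsto (fun L:ℝ => Real.exp (-L/2)) atTop (nhds 0) :=
    Real.tendsto_exp_atBot.comp
      (tendsto_neg_atTop_atBot.atBot_div_const (by norm_num : (0:ℝ) < 2))
  simpa using h1.mul h2
end

section
/- Let (X, μ) be a σ-finite measure space, λ ≥ 0 a real number, and φ, τ : X × X → [0,1] measurable symmetric kernels (φ(x,y) = φ(y,x) and τ(x,y) = τ(y,x) for all x, y) such that pointwise φ ≤ τ and τ(x,y) ≤ φ(x,y) + λ·(φ ⋆ τ)(x,y) for all x, y. Set N := sup_{y ∈ X} ∫_X φ(x,y) dμ(x) and Δ := λ² · sup_{(x,y) ∈ X×X} τ^{⋆3}(x,y), and assume N < ∞. Then λ · sup_{(x,y) ∈ X×X} τ^{⋆2}(x,y) ≤ λN + 2Δ + λNΔ. -/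
open MeasureTheory ENNReal

/-- The convolution of two nonnegative (`ℝ≥0∞`-valued) kernels on a measure space:
`(f ⋆ g)(x,y) = ∫ f(x,u) g(u,y) dμ(u)`. -/
noncomputable def econv {X : Type*} [MeasurableSpace X] (μ : Measure X)
    (f g : X → X → ENNReal) : X → X → ENNReal :=
  fun x y => ∫⁻ u, f x u * g u y ∂μ

/-- the "bubble bound".  Let `φ, τ` be measurable symmetric `[0,1]`-valued
kernels on a σ-finite measure space with `φ ≤ τ` and `τ ≤ φ + λ (φ ⋆ τ)` pointwise, let
`N = sup_y ∫ φ(x,y) dμ(x) < ∞` and `Δ = λ² sup_{x,y} τ^{⋆3}(x,y)`.  Then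
`λ · sup_{x,y} τ^{⋆2}(x,y) ≤ λN + 2Δ + λNΔ`. -/
theorem stmt14 {X : Type*} [MeasurableSpace X] (μ : Measure X) [SigmaFinite μ]
    (lam : ℝ) (hlam : 0 ≤ lam)
    (φ τ : X → X → ENNReal)
    (hφm : Measurable (Function.uncurry φ)) (hτm : Measurable (Function.uncurry τ))
    (hφ1 : ∀ x y, φ x y ≤ 1) (hτ1 : ∀ x y, τ x y ≤ 1)
    (hφs : ∀ x y, φ x y = φ y x) (hτs : ∀ x y, τ x y = τ y x)
    (hφτ : ∀ x y, φ x y ≤ τ x y)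
    (hfirst : ∀ x y, τ x y ≤ φ x y + ENNReal.ofReal lam * econv μ φ τ x y)
    (N Δ : ENNReal)
    (hN : N = ⨆ y : X, ∫⁻ x, φ x y ∂μ) (hNfin : N ≠ ⊤)
    (hΔ : Δ = ENNReal.ofReal lam ^ 2 * ⨆ x : X, ⨆ y : X, econv μ τ (econv μ τ τ) x y) :
    ENNReal.ofReal lam * (⨆ x : X, ⨆ y : X, econv μ τ τ x y) ≤
      ENNReal.ofReal lam * N + 2 * Δ + ENNReal.ofReal lam * N * Δ := by
  set L := ENNReal.ofReal lam with hL
  have hLne : L ≠ ⊤ := ENNReal.ofReal_ne_top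
  -- key pointwise bound
  have key : ∀ x y : X, L * econv μ τ τ x y ≤ L * N + Δ := by
    intro x y
    have hmφx : Measurable fun u => φ x u := hφm.comp measurable_prodMk_left
    have hmτy : Measurable fun u => τ u y :=
      hτm.comp (measurable_id.prodMk measurable_const)
    have step1 : econv μ τ τ x y ≤
        (∫⁻ u, φ x u * τ u y ∂μ) + L * ∫⁻ u, econv μ φ τ x u * τ u y ∂μ := by
      have h1 : econv μ τ τ x y ≤
          ∫⁻ u, (φ x u * τ u y + L * (econv μ φ τ x u * τ u y)) ∂μ := by
        refine lintegral_mono fun u => ?_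
        calc τ x u * τ u y ≤ (φ x u + L * econv μ φ τ x u) * τ u y :=
              mul_le_mul_left (hfirst x u) _
          _ = φ x u * τ u y + L * (econv μ φ τ x u * τ u y) := by ring
      calc econv μ τ τ x y ≤ _ := h1
        _ = (∫⁻ u, φ x u * τ u y ∂μ) + ∫⁻ u, L * (econv μ φ τ x u * τ u y) ∂μ :=
            lintegral_add_left (hmφx.mul hmτy) _
        _ = (∫⁻ u, φ x u * τ u y ∂μ) + L * ∫⁻ u, econv μ φ τ x u * τ u y ∂μ := by
            rw [lintegral_const_mul' _ _ hLne]
    have hA : (∫⁻ u, φ x u * τ u y ∂μ) ≤ N := by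
      calc (∫⁻ u, φ x u * τ u y ∂μ) ≤ ∫⁻ u, φ u x ∂μ := by
            refine lintegral_mono fun u => ?_
            rw [hφs x u]
            exact mul_le_of_le_one_right' (hτ1 u y)
        _ ≤ N := hN ▸ le_iSup (fun z => ∫⁻ u, φ u z ∂μ) x
    have hB : (∫⁻ u, econv μ φ τ x u * τ u y ∂μ) ≤ econv μ τ (econv μ τ τ) x y := by
      have hswap : (∫⁻ u, econv μ φ τ x u * τ u y ∂μ)
          = ∫⁻ v, φ x v * ∫⁻ u, τ v u * τ u y ∂μ ∂μ := by
        have e1 : ∀ u : X, econv μ φ τ x u * τ u y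
            = ∫⁻ v, φ x v * τ v u * τ u y ∂μ := by
          intro u
          rw [econv, ← lintegral_mul_const' (τ u y) _ (lt_of_le_of_lt (hτ1 u y)
            ENNReal.one_lt_top).ne]
        simp_rw [e1]
        rw [lintegral_lintegral_swap]
        · refine lintegral_congr fun v => ?_
          rw [← lintegral_const_mul' _ _ (lt_of_le_of_lt (hφ1 x v)
            ENNReal.one_lt_top).ne]
          exact lintegral_congr fun u => by ring
        · apply Measurable.aemeasurable
          apply Measurable.mul
          apply Measurable.mul
          · exact (hφm.comp ((measurable_const (a := x)).prodMk measurable_snd))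
          · exact hτm.comp (measurable_snd.prodMk measurable_fst)
          · exact hτm.comp (measurable_fst.prodMk measurable_const)
      rw [hswap]
      exact lintegral_mono fun v => mul_le_mul_left (hφτ x v) _
    calc L * econv μ τ τ x y
        ≤ L * ((∫⁻ u, φ x u * τ u y ∂μ) + L * ∫⁻ u, econv μ φ τ x u * τ u y ∂μ) :=
          mul_le_mul_right step1 _
      _ = L * (∫⁻ u, φ x u * τ u y ∂μ)
            + L ^ 2 * ∫⁻ u, econv μ φ τ x u * τ u y ∂μ := by ring
      _ ≤ L * N + L ^ 2 * econv μ τ (econv μ τ τ) x y :=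
          add_le_add (mul_le_mul_right hA _) (mul_le_mul_right hB _)
      _ ≤ L * N + Δ := by
          refine add_le_add_right ?_ _
          rw [hΔ]
          refine mul_le_mul_right ?_ _
          exact le_iSup_of_le x (le_iSup_of_le y le_rfl)
  have hmain : L * (⨆ x : X, ⨆ y : X, econv μ τ τ x y) ≤ L * N + Δ := by
    rw [ENNReal.mul_iSup]
    refine iSup_le fun x => ?_
    rw [ENNReal.mul_iSup]
    exact iSup_le fun y => key x y
  calc L * (⨆ x : X, ⨆ y : X, econv μ τ τ x y) ≤ L * N + Δ := hmain
    _ ≤ L * N + 2 * Δ := by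
        refine add_le_add_right ?_ _
        calc Δ = 1 * Δ := (one_mul Δ).symm
          _ ≤ 2 * Δ := mul_le_mul_left one_le_two Δ
    _ ≤ L * N + 2 * Δ + L * N * Δ := le_self_add
end

section
/- There exist constants C > 0 and r₀ > 0 such that for all real r ≥ r₀ and all L ≥ r/2: |arccos( tanh(r/2)/tanh(L) ) − 2·e^{−r/2}·√(1 − e^{r−2L})| ≤ C·e^{−r}·√(1 − e^{r−2L}). -/
private lemma tanh_formula (t : ℝ) :
    Real.tanh t = (1 - Real.exp (-(2*t))) / (1 + Real.exp (-(2*t))) := by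
  rw [Real.tanh_eq_sinh_div_cosh, Real.sinh_eq, Real.cosh_eq]
  have h1 : Real.exp (-(2*t)) = Real.exp (-t) * Real.exp (-t) := by
    rw [← Real.exp_add]; ring_nf
  have h2 : Real.exp t * Real.exp (-t) = 1 := by rw [← Real.exp_add]; simp
  have h3 : (0:ℝ) < Real.exp t := Real.exp_pos t
  have h4 : (0:ℝ) < Real.exp (-t) := Real.exp_pos _
  rw [div_div_div_cancel_right₀, div_eq_div_iff (by positivity) (by positivity)]
  · nlinarith [h1, h2]
  · norm_num

set_option maxHeartbeats 1000000 in
private lemma key_estimate (u v A s x : ℝ) (hu0 : 0 < u) (hu36 : u ≤ 1/36)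
    (hv0 : 0 < v) (hvu : v ≤ u) (hA0 : 0 < A) (hA2 : A ^ 2 = u) (hA1 : A ≤ 1)
    (hs0 : 0 ≤ s) (hs2 : s ^ 2 = 1 - v / u)
    (hx_def : x = (1-u)*(1+v) / ((1+u)*(1-v))) :
    |Real.arccos x - 2 * A * s| ≤ 100 * u * s := by
  have hu1 : u < 1 := by linarith
  have hv1 : v < 1 := by linarith
  have huvle : u * v ≤ u := by
    have h := mul_le_mul_of_nonneg_left hv1.le hu0.le
    linarith
  have huv0 : 0 ≤ u * v := by positivity
  have huu : u * u ≤ u := by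
    have h := mul_nonneg hu0.le (by linarith : (0:ℝ) ≤ 1 - u)
    linarith
  have hAu : u ≤ A := by
    have h := mul_nonneg hA0.le (by linarith : (0:ℝ) ≤ 1 - A)
    linarith [hA2]
  have hs1 : s ≤ 1 := by
    linarith [hs2, div_nonneg hv0.le hu0.le, sq_nonneg (s - 1)]
  have hus2 : u * s ^ 2 = u - v := by rw [hs2]; field_simp
  have hden : (0:ℝ) < (1+u)*(1-v) := by
    have : (1+u)*(1-v) = 1 + u - v - u*v := by ring
    linarith [huvle]
  have h1u : (1:ℝ) + u ≠ 0 := by positivity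
  have h1v : (1:ℝ) - v ≠ 0 := by linarith
  have hx1 : x ≤ 1 := by
    rw [hx_def, div_le_one hden]; linarith
  have hx34 : 3/4 ≤ x := by
    rw [hx_def, le_div_iff₀ hden]; linarith [huvle, hu36, hv0.le]
  rcases hs0.eq_or_lt with hs | hspos
  · -- degenerate case s = 0
    have h0 : (0:ℝ) = 1 - v / u := by
      have h : s ^ 2 = 0 := by rw [← hs]; ring
      linarith [h ▸ hs2]
    have hveq : v = u := by
      have h1 : v / u = 1 := by linarith
      field_simp at h1; linarith
    have hx1' : x = 1 := by
      rw [hx_def, hveq, div_eq_one_iff_eq (ne_of_gt (by linarith [huu] : (0:ℝ) < (1+u)*(1-u)))]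
      ring
    rw [hx1', Real.arccos_one, ← hs]
    simp
  -- main case
  have hvltu : v < u := by
    have h := mul_pos hu0 (pow_pos hspos 2)
    linarith [hus2]
  have hxlt1 : x < 1 := by
    rw [hx_def, div_lt_one hden]; linarith
  set θ : ℝ := Real.arccos x with hθ_def
  have hθpos : 0 < θ := Real.arccos_pos.mpr hxlt1
  have hθpi : θ ≤ Real.pi := Real.arccos_le_pi x
  have hcos : Real.cos θ = x := Real.cos_arccos (by linarith) hx1
  set a : ℝ := Real.sqrt (1 - x ^ 2) with ha_def
  have hsin : Real.sin θ = a := Real.sin_arccos x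
  have ha0 : 0 ≤ a := Real.sqrt_nonneg _
  have ha2 : a ^ 2 = 1 - x ^ 2 := Real.sq_sqrt
    (by linarith [mul_nonneg (by linarith : (0:ℝ) ≤ 1 - x) (by linarith : (0:ℝ) ≤ 1 + x)])
  set b : ℝ := 2 * A * s with hb_def
  have hb0 : 0 < b := by positivity
  have hb2 : b ^ 2 = 4 * u * s ^ 2 := by
    rw [hb_def]; linear_combination (4*s^2) * hA2
  set D : ℝ := ((1+u)*(1-v)) ^ 2 with hD_def
  have hDpos : 0 < D := by positivity
  clear_value θ a b D
  have hE36 : (35:ℝ)/36 ≤ (1+u)*(1-v) := by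
    have : (1+u)*(1-v) = 1 + u - v - u*v := by ring
    linarith [huvle]
  have hDhalf : 1/2 ≤ D := by
    rw [hD_def]; linarith [hE36, sq_nonneg ((1+u)*(1-v) - 35/36)]
  have haD : a ^ 2 * D = 4 * (u - v) * (1 - u*v) := by
    rw [ha2, hx_def, hD_def]
    field_simp
    ring
  have hDeq : (a ^ 2 - b ^ 2) * D = 4 * u * s^2 * ((1 - u*v) - D) := by
    linear_combination haD - D * hb2 - (4*(1 - u*v)) * hus2
  -- bounds for w = u - v - u*v
  have hw1 : u - v - u*v ≤ u := by linarith [huv0]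
  have hw2 : -u ≤ u - v - u*v := by
    have h := mul_le_mul_of_nonneg_right hvu (by linarith : (0:ℝ) ≤ 1 + u)
    linarith [h, huu]
  have hw3 : (u - v - u*v)^2 ≤ u := by
    have h1 : (0:ℝ) ≤ (u - (u - v - u*v)) * (u + (u - v - u*v)) :=
      mul_nonneg (by linarith) (by linarith)
    linarith [h1, huu]
  have hNup : (1 - u*v) - D ≤ 4*u := by
    rw [hD_def]
    linarith [hw2, huv0, sq_nonneg (u - v - u*v), hu0.le]
  have hNlo : -(4*u) ≤ (1 - u*v) - D := by
    rw [hD_def]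
    linarith [hw1, hw3, huvle, hu0.le]
  have hc0 : (0:ℝ) ≤ 4 * u * s^2 := by positivity
  have h16up : (a ^ 2 - b ^ 2) * D ≤ 16 * u^2 * s^2 := by
    rw [hDeq]; linarith [mul_le_mul_of_nonneg_left hNup hc0]
  have h16lo : -(16 * u^2 * s^2) ≤ (a ^ 2 - b ^ 2) * D := by
    rw [hDeq]; linarith [mul_le_mul_of_nonneg_left hNlo hc0]
  have hup : a ^ 2 - b ^ 2 ≤ 32 * u^2 * s^2 := by
    rcases le_or_gt (a ^ 2 - b ^ 2) 0 with h | h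
    · linarith [sq_nonneg (u*s)]
    · have h' := mul_le_mul_of_nonneg_left hDhalf h.le
      linarith [h16up]
  have hlo : -(32 * u^2 * s^2) ≤ a ^ 2 - b ^ 2 := by
    rcases le_or_gt 0 (a ^ 2 - b ^ 2) with h | h
    · linarith [sq_nonneg (u*s)]
    · have h' := mul_le_mul_of_nonneg_left hDhalf (by linarith : (0:ℝ) ≤ b^2 - a^2)
      linarith [h16lo]
  have habs2 : |a ^ 2 - b ^ 2| ≤ 32 * u^2 * s^2 := abs_le.mpr ⟨by linarith, hup⟩
  have hab : |a - b| ≤ 16 * u * s := by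
    have h1 : |a - b| * (a + b) = |a ^ 2 - b ^ 2| := by
      rw [← abs_of_nonneg (by linarith : (0:ℝ) ≤ a + b), ← abs_mul]
      ring_nf
    have h2 : |a - b| * b ≤ |a - b| * (a + b) :=
      mul_le_mul_of_nonneg_left (by linarith) (abs_nonneg _)
    have h3 : 32 * u^2 * s^2 ≤ (16 * u * s) * b := by
      rw [hb_def]
      have h := mul_le_mul_of_nonneg_left hAu
        (show (0:ℝ) ≤ 32*u*s^2 by positivity)
      linarith [h]
    have h4 : |a - b| * b ≤ (16 * u * s) * b := by
      calc |a - b| * b ≤ |a - b| * (a + b) := h2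
        _ = |a ^ 2 - b ^ 2| := h1
        _ ≤ 32 * u^2 * s^2 := habs2
        _ ≤ (16 * u * s) * b := h3
    exact le_of_mul_le_mul_right h4 hb0
  have hθ1 : θ ≤ 1 := by
    by_contra h
    push_neg at h
    have h2 : Real.cos θ ≤ Real.cos 1 :=
      Real.cos_le_cos_of_nonneg_of_le_pi (by norm_num) hθpi h.le
    have h3 : Real.cos 1 ≤ 2/3 := Real.cos_one_le.trans (by norm_num)
    rw [hcos] at h2
    linarith
  have hcube : θ - θ ^ 3 / 4 < a := by
    have h := Real.sin_gt_sub_cube hθpos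
    rw [hsin] at h; linarith [pow_pos hθpos 3]
  have hθa : θ ≤ (4/3) * a := by
    have t1 : (0:ℝ) ≤ θ * (1 - θ) := mul_nonneg hθpos.le (by linarith)
    have t2 : (0:ℝ) ≤ θ * θ * (1 - θ) :=
      mul_nonneg (mul_nonneg hθpos.le hθpos.le) (by linarith)
    linarith [hcube, t1, t2]
  have ha_up : a ≤ 3 * A * s := by
    have h0 := mul_le_mul_of_nonneg_left hu36 (show (0:ℝ) ≤ 32*u*s^2 by positivity)
    have h1 : a ^ 2 ≤ 9 * u * s ^ 2 := by linarith [hup, hb2, h0, hc0]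
    have h2 : (3 * A * s) ^ 2 = 9 * u * s ^ 2 := by linear_combination (9*s^2) * hA2
    have hc : (0:ℝ) ≤ 3*A*s := by positivity
    calc a = Real.sqrt (a^2) := (Real.sqrt_sq ha0).symm
      _ ≤ Real.sqrt ((3*A*s)^2) := Real.sqrt_le_sqrt (by linarith)
      _ = 3*A*s := Real.sqrt_sq hc
  have hθb : θ ≤ 4 * A * s := by
    calc θ ≤ (4/3) * a := hθa
      _ ≤ (4/3) * (3 * A * s) := by linarith
      _ = 4 * A * s := by ring
  have hθa2 : θ - a ≤ 16 * u * s := by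
    have h1 : θ ^ 3 ≤ (4 * A * s) ^ 3 := pow_le_pow_left₀ hθpos.le hθb 3
    have h3 : A * s ^ 2 ≤ 1 := by
      linarith [mul_nonneg (by linarith : (0:ℝ) ≤ 1 - A) (sq_nonneg s),
        mul_nonneg (by linarith : (0:ℝ) ≤ 1 - s) hs0]
    have h4 : (4 * A * s)^3 ≤ 64 * u * s := by
      have h2 : (4 * A * s)^3 = 64 * (A^2) * s * (A * s^2) := by ring
      rw [h2, hA2]
      have h := mul_le_mul_of_nonneg_left h3
        (show (0:ℝ) ≤ 64*u*s by positivity)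
      linarith [h]
    linarith [hcube, h1, h4]
  have hsinle : a ≤ θ := by
    have h := Real.sin_lt hθpos
    rw [hsin] at h; exact h.le
  have htri : |θ - b| ≤ |θ - a| + |a - b| := abs_sub_le θ a b
  have h1 : |θ - a| = θ - a := abs_of_nonneg (by linarith)
  have hfin : |θ - b| ≤ 32 * u * s := by
    rw [h1] at htri; linarith
  calc |θ - b| ≤ 32 * u * s := hfin
    _ ≤ 100 * u * s := by linarith [mul_nonneg hu0.le hs0]

set_option maxHeartbeats 1000000 in
/-- There are constants `C > 0` and `r₀ > 0` such that for all `r ≥ r₀`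
and `L ≥ r/2`,
`|arccos(tanh(r/2)/tanh L) − 2 e^{−r/2} √(1 − e^{r−2L})| ≤ C e^{−r} √(1 − e^{r−2L})`. -/
theorem stmt15 :
    ∃ C > (0 : ℝ), ∃ r₀ > (0 : ℝ), ∀ r L : ℝ, r₀ ≤ r → r / 2 ≤ L →
      |Real.arccos (Real.tanh (r / 2) / Real.tanh L) -
          2 * Real.exp (-r / 2) * Real.sqrt (1 - Real.exp (r - 2 * L))| ≤
        C * Real.exp (-r) * Real.sqrt (1 - Real.exp (r - 2 * L)) := by
  refine ⟨100, by norm_num, 10, by norm_num, fun r L hr hL => ?_⟩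
  have hu0 : 0 < Real.exp (-r) := Real.exp_pos _
  have hv0 : 0 < Real.exp (-(2*L)) := Real.exp_pos _
  have hA0 : 0 < Real.exp (-r/2) := Real.exp_pos _
  have hA2 : Real.exp (-r/2) ^ 2 = Real.exp (-r) := by
    rw [sq, ← Real.exp_add]; congr 1; ring
  have hA1 : Real.exp (-r/2) ≤ 1 := by
    rw [Real.exp_le_one_iff]; linarith
  have hvu : Real.exp (-(2*L)) ≤ Real.exp (-r) := Real.exp_le_exp.mpr (by linarith)
  have hu36 : Real.exp (-r) ≤ 1 / 36 := by
    have h5 : (6:ℝ) ≤ Real.exp 5 := by nlinarith [Real.add_one_le_exp (5:ℝ)]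
    have h10 : (36:ℝ) ≤ Real.exp 10 := by
      have h : Real.exp 10 = Real.exp 5 * Real.exp 5 := by rw [← Real.exp_add]; norm_num
      nlinarith
    have hr10 : Real.exp (-r) ≤ Real.exp (-10) := Real.exp_le_exp.mpr (by linarith)
    rw [show Real.exp (-10:ℝ) = (Real.exp 10)⁻¹ from Real.exp_neg 10] at hr10
    have : (Real.exp 10)⁻¹ ≤ 1/36 := by
      rw [inv_le_comm₀ (by positivity) (by norm_num)]; linarith
    linarith
  have htr : Real.tanh (r/2) = (1 - Real.exp (-r)) / (1 + Real.exp (-r)) := by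
    rw [tanh_formula (r/2)]
    have h : -(2*(r/2)) = -r := by ring
    rw [h]
  have htL : Real.tanh L = (1 - Real.exp (-(2*L))) / (1 + Real.exp (-(2*L))) :=
    tanh_formula L
  have hv1 : Real.exp (-(2*L)) < 1 := by
    rw [Real.exp_lt_one_iff]; linarith
  have hx : Real.tanh (r / 2) / Real.tanh L =
      (1 - Real.exp (-r)) * (1 + Real.exp (-(2*L))) /
        ((1 + Real.exp (-r)) * (1 - Real.exp (-(2*L)))) := by
    rw [htr, htL]
    have h1 : (1:ℝ) + Real.exp (-r) ≠ 0 := by positivity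
    have h2 : (1:ℝ) + Real.exp (-(2*L)) ≠ 0 := by positivity
    have h3 : (1:ℝ) - Real.exp (-(2*L)) ≠ 0 := by linarith
    field_simp
    try ring
  have hers : Real.exp (r - 2*L) = Real.exp (-(2*L)) / Real.exp (-r) := by
    have h : -(2*L) - -r = r - 2*L := by ring
    rw [← Real.exp_sub, h]
  have hvu' : Real.exp (-(2*L)) / Real.exp (-r) ≤ 1 := by
    rw [div_le_one hu0]; exact hvu
  have harg0 : 0 ≤ 1 - Real.exp (r - 2*L) := by rw [hers]; linarith
  have hs0 : 0 ≤ Real.sqrt (1 - Real.exp (r - 2*L)) := Real.sqrt_nonneg _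
  have hs2 : Real.sqrt (1 - Real.exp (r - 2*L)) ^ 2
      = 1 - Real.exp (-(2*L)) / Real.exp (-r) := by
    rw [Real.sq_sqrt harg0, hers]
  rw [hx]
  exact key_estimate (Real.exp (-r)) (Real.exp (-(2*L))) (Real.exp (-r/2))
    (Real.sqrt (1 - Real.exp (r - 2*L)))
    ((1 - Real.exp (-r)) * (1 + Real.exp (-(2*L))) /
        ((1 + Real.exp (-r)) * (1 - Real.exp (-(2*L)))))
    hu0 hu36 hv0 hvu hA0 hA2 hA1 hs0 hs2 rfl
end
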